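/- arXiv:2501.04629 — 8 statements merged into one kernel-verified Lean document; each statement's English description precedes it below -/
import Mathlib

section
/- Let L be a linear subspace of ℝⁿ, A : ℝⁿ → ℝⁿ a self-adjoint linear operator, and σ ∈ ℝ such that ⟨w, A w⟩ ≥ σ‖w‖² for all w ∈ L. Then there exists a self-adjoint linear operator B : ℝⁿ → ℝⁿ with ⟨w, B w⟩ = ⟨w, A w⟩ for all w ∈ L and ⟨w, B w⟩ ≥ σ‖w‖² for all w ∈ ℝⁿ. -/
/-!
With `P` the orthogonal projection onto `L`, take `B = P A P + σ (1 - P)`. It is self-adjoint,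
its quadratic form is `⟪P w, A (P w)⟫ + σ ‖w - P w‖²`, which equals `⟪w, A w⟫` on `L`, and the
bound on `L` together with Pythagoras `‖w‖² = ‖P w‖² + ‖w - P w‖²` gives `σ ‖w‖² ≤ ⟪w, B w⟫`.
-/

open scoped RealInnerProductSpace

namespace Submodule

variable {E : Type*} [NormedAddCommGroup E] [InnerProductSpace ℝ E]
  {K : Submodule ℝ E} [K.HasOrthogonalProjection]

lemma real_inner_starProjection_self (v : E) :
    ⟪v, K.starProjection v⟫ = ‖K.starProjection v‖ ^ 2 := by
  simpa [real_inner_comm] using K.re_inner_starProjection_eq_normSq v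

variable (K) in
noncomputable def compressionWithScalar (A : E →L[ℝ] E) (σ : ℝ) : E →L[ℝ] E :=
  K.starProjection ∘L A ∘L K.starProjection + σ • Kᗮ.starProjection

lemma isSelfAdjoint_compressionWithScalar [CompleteSpace E] {A : E →L[ℝ] E}
    (hA : IsSelfAdjoint A) (σ : ℝ) : IsSelfAdjoint (K.compressionWithScalar A σ) :=
  (hA.conj_starProjection K).add ((IsSelfAdjoint.all σ).smul (isSelfAdjoint_starProjection Kᗮ))

lemma inner_compressionWithScalar_self (A : E →L[ℝ] E) (σ : ℝ) (w : E) :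
    ⟪w, K.compressionWithScalar A σ w⟫ =
      ⟪K.starProjection w, A (K.starProjection w)⟫ + σ * ‖Kᗮ.starProjection w‖ ^ 2 := by
  simp only [compressionWithScalar, add_apply, ContinuousLinearMap.comp_apply, smul_apply,
    inner_add_right, real_inner_smul_right, real_inner_starProjection_self,
    ← K.inner_starProjection_left_eq_right]

lemma inner_compressionWithScalar_self_of_mem (A : E →L[ℝ] E) (σ : ℝ) {w : E} (hw : w ∈ K) :
    ⟪w, K.compressionWithScalar A σ w⟫ = ⟪w, A w⟫ := by
  rw [inner_compressionWithScalar_self, starProjection_eq_self_iff.mpr hw,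
    starProjection_orthogonal_apply_eq_zero hw, norm_zero]
  ring

lemma le_inner_compressionWithScalar_self {A : E →L[ℝ] E} {σ : ℝ}
    (h : ∀ w ∈ K, σ * ‖w‖ ^ 2 ≤ ⟪w, A w⟫) (w : E) :
    σ * ‖w‖ ^ 2 ≤ ⟪w, K.compressionWithScalar A σ w⟫ := by
  have hK := h _ (K.starProjection_apply_mem w)
  rw [inner_compressionWithScalar_self, K.norm_sq_eq_add_norm_sq_starProjection w]
  linarith

end Submodule

/-- A quadratic-form lower bound of a self-adjoint operator on a subspace `L` can be
extended: there is a self-adjoint `B` agreeing with `A`'s quadratic form on `L` and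
satisfying the same eigenvalue lower bound on the whole space. -/
theorem stmt1 (n : ℕ) (L : Submodule ℝ (EuclideanSpace ℝ (Fin n)))
    (A : EuclideanSpace ℝ (Fin n) →L[ℝ] EuclideanSpace ℝ (Fin n))
    (hA : IsSelfAdjoint A) (σ : ℝ)
    (h : ∀ w ∈ L, σ * ‖w‖ ^ 2 ≤ ⟪w, A w⟫) :
    ∃ B : EuclideanSpace ℝ (Fin n) →L[ℝ] EuclideanSpace ℝ (Fin n),
      IsSelfAdjoint B ∧ (∀ w ∈ L, ⟪w, B w⟫ = ⟪w, A w⟫) ∧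
      ∀ w, σ * ‖w‖ ^ 2 ≤ ⟪w, B w⟫ :=
  ⟨L.compressionWithScalar A σ, Submodule.isSelfAdjoint_compressionWithScalar hA σ,
    fun _ hw => Submodule.inner_compressionWithScalar_self_of_mem A σ hw,
    Submodule.le_inner_compressionWithScalar_self h⟩
end

section
/- Let A be a symmetric n×n real matrix satisfying ⟨w, A w⟩ ≥ (s + 2μ)‖w‖² for all w ∈ ℝⁿ, where s, μ > 0, and let λ > 0. Then for all w, x ∈ ℝⁿ, (1/2)⟨x, A x⟩ + (1/λ)‖x − w‖² ≥ (1/λ)‖w‖² − (2/λ²)⟨w, (A + (2/λ)I)⁻¹ w⟩. -/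
/-!
Completing the square: for a symmetric matrix `B` with nonnegative quadratic form and
`B u = y`, expanding `0 ≤ ⟪x - u, B (x - u)⟫` gives `2⟪x, y⟫ ≤ ⟪x, B x⟫ + ⟪y, u⟫`.
With `B = A + (2/λ) I`, which the coercivity of `A` makes positive definite, and
`y = (2/λ) w`, this is the claimed lower bound, since
`(1/2)⟪x, A x⟫ + (1/λ)‖x - w‖² = (1/2)⟪x, B x⟫ - (2/λ)⟪x, w⟫ + (1/λ)‖w‖²`.
-/

open Matrix

namespace Matrix

variable {ι : Type*} [Fintype ι]

theorem IsSymm.dotProduct_mulVec_comm {R : Type*} [CommSemiring R] {B : Matrix ι ι R}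
    (hB : B.IsSymm) (u v : ι → R) : u ⬝ᵥ B *ᵥ v = (B *ᵥ u) ⬝ᵥ v := by
  rw [dotProduct_mulVec, ← mulVec_transpose, hB]

theorem IsSymm.two_mul_dotProduct_le_of_mulVec_eq {R : Type*} [CommRing R] [PartialOrder R]
    [IsOrderedRing R] {B : Matrix ι ι R} (hB : B.IsSymm) (hnonneg : ∀ z, 0 ≤ z ⬝ᵥ B *ᵥ z)
    {u y : ι → R} (hu : B *ᵥ u = y) (x : ι → R) :
    2 * (x ⬝ᵥ y) ≤ x ⬝ᵥ B *ᵥ x + y ⬝ᵥ u := by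
  have hsquare : (x - u) ⬝ᵥ B *ᵥ (x - u) = x ⬝ᵥ B *ᵥ x - 2 * (x ⬝ᵥ y) + y ⬝ᵥ u := by
    rw [mulVec_sub, hu, dotProduct_sub, sub_dotProduct, sub_dotProduct,
      hB.dotProduct_mulVec_comm u x, hu, dotProduct_comm y x, dotProduct_comm u y]
    ring
  refine sub_nonneg.mp ?_
  convert hnonneg (x - u) using 1
  rw [hsquare]
  ring

theorem PosDef.two_mul_dotProduct_le_add_inv [DecidableEq ι] {B : Matrix ι ι ℝ}
    (hB : B.PosDef) (x y : ι → ℝ) :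
    2 * (x ⬝ᵥ y) ≤ x ⬝ᵥ B *ᵥ x + y ⬝ᵥ B⁻¹ *ᵥ y := by
  have hdet : IsUnit B.det := (isUnit_iff_isUnit_det B).mp hB.isUnit
  refine (isHermitian_iff_isSymm.mp hB.isHermitian).two_mul_dotProduct_le_of_mulVec_eq
    (fun z ↦ by simpa using hB.posSemidef.dotProduct_mulVec_nonneg z) ?_ x
  rw [mulVec_mulVec, mul_nonsing_inv B hdet, one_mulVec]

theorem posDef_add_smul_one_of_le_dotProduct_mulVec [DecidableEq ι] {A : Matrix ι ι ℝ}
    (hA : A.IsSymm) {a c : ℝ} (hac : 0 < a + c)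
    (h : ∀ w, a * (w ⬝ᵥ w) ≤ w ⬝ᵥ A *ᵥ w) : (A + c • (1 : Matrix ι ι ℝ)).PosDef := by
  refine .of_dotProduct_mulVec_pos
    (isHermitian_iff_isSymm.mpr (hA.add (isSymm_one.smul c))) fun w hw ↦ ?_
  have hww : 0 < w ⬝ᵥ w := by simpa using dotProduct_self_star_pos_iff.mpr hw
  have hform : w ⬝ᵥ (A + c • 1) *ᵥ w = w ⬝ᵥ A *ᵥ w + c * (w ⬝ᵥ w) := by
    rw [add_mulVec, smul_mulVec, one_mulVec, dotProduct_add, dotProduct_smul, smul_eq_mul]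
  rw [star_trivial, hform]
  nlinarith [h w]

end Matrix

/-- For a symmetric matrix `A` with `⟨w, A w⟩ ≥ (s+2μ)‖w‖²`, `s, μ > 0`, and `λ > 0`:
`(1/2)⟨x, A x⟩ + (1/λ)‖x − w‖² ≥ (1/λ)‖w‖² − (2/λ²)⟨w, (A + (2/λ)I)⁻¹ w⟩`. -/
theorem stmt3 (n : ℕ) (A : Matrix (Fin n) (Fin n) ℝ) (hA : A.IsSymm)
    (s μ lam : ℝ) (hs : 0 < s) (hμ : 0 < μ) (hlam : 0 < lam)
    (h : ∀ w : Fin n → ℝ, (s + 2 * μ) * (w ⬝ᵥ w) ≤ w ⬝ᵥ (A *ᵥ w)) :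
    ∀ w x : Fin n → ℝ,
      (1 / lam) * (w ⬝ᵥ w)
        - (2 / lam ^ 2) * (w ⬝ᵥ ((A + (2 / lam) • (1 : Matrix (Fin n) (Fin n) ℝ))⁻¹ *ᵥ w))
      ≤ (1 / 2) * (x ⬝ᵥ (A *ᵥ x)) + (1 / lam) * ((x - w) ⬝ᵥ (x - w)) := by
  intro w x
  set B := A + (2 / lam) • (1 : Matrix (Fin n) (Fin n) ℝ)
  have hB : B.PosDef :=
    posDef_add_smul_one_of_le_dotProduct_mulVec hA (by positivity) h
  have hbound := hB.two_mul_dotProduct_le_add_inv x ((2 / lam) • w)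
  have hBx : x ⬝ᵥ B *ᵥ x = x ⬝ᵥ A *ᵥ x + 2 / lam * (x ⬝ᵥ x) := by
    rw [add_mulVec, smul_mulVec, one_mulVec, dotProduct_add, dotProduct_smul, smul_eq_mul]
  have hdist : (x - w) ⬝ᵥ (x - w) = x ⬝ᵥ x - 2 * (x ⬝ᵥ w) + w ⬝ᵥ w := by
    rw [sub_dotProduct, dotProduct_sub, dotProduct_sub, dotProduct_comm w x]
    ring
  rw [hBx, mulVec_smul, dotProduct_smul, smul_dotProduct, dotProduct_smul] at hbound
  simp only [smul_eq_mul] at hbound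
  rw [hdist]
  field_simp at hbound ⊢
  linarith
end

section
/- Let f_k : ℝⁿ → ℝ ∪ {∞} be lower semicontinuous functions, each positively homogeneous of degree 2 (f_k(tw) = t² f_k(w) for t > 0). Suppose for some μ ∈ ℝ and some function f with f(w) ≥ μ‖w‖² for all w: (a) for every w ∈ ℝⁿ and every sequence w_k → w, liminf_k f_k(w_k) ≥ f(w). Then for every δ > 0 there exists K such that for all k ≥ K and all w ∈ ℝⁿ, f_k(w) ≥ (μ − δ)‖w‖². -/
/-!
By homogeneity it suffices to bound `f k` on the unit sphere and at the origin. If the bound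
`μ - δ` failed on the sphere for infinitely many `k`, compactness of the sphere would give bad unit
vectors along a subsequence converging to some `a`; filling the gaps with `a` yields a sequence
`w_k → a` with `liminf f_k(w_k) ≤ μ - δ < μ ≤ f(a)`, contradicting (a). At the origin,
`f_k(0) = 4 f_k(0)` forces `f_k(0) ∈ {⊥, 0, ⊤}`, and (a) for the constant sequence `0` excludes `⊥`
eventually.
-/

open Filter Topology

theorem Filter.Tendsto.extend_strictMono {X : Type*} [TopologicalSpace X] {σ : ℕ → ℕ}
    (hσ : StrictMono σ) {u : ℕ → X} {a : X} (hu : Tendsto u atTop (𝓝 a)) :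
    Tendsto (Function.extend σ u fun _ => a) atTop (𝓝 a) := by
  intro U hU
  obtain ⟨J, hJ⟩ := eventually_atTop.mp (hu hU)
  refine eventually_atTop.mpr ⟨σ J, fun k hk => ?_⟩
  by_cases hk' : ∃ j, σ j = k
  · obtain ⟨j, rfl⟩ := hk'
    rw [hσ.injective.extend_apply]
    exact hJ j (hσ.le_iff_le.mp hk)
  · rw [Function.extend_apply' _ _ _ hk']
    exact mem_of_mem_nhds hU

theorem IsSeqCompact.eventually_forall_lt_of_le_liminf {X β : Type*} [TopologicalSpace X]
    [CompleteLinearOrder β] {f : ℕ → X → β} {flim : X → β} {s : Set X} (hs : IsSeqCompact s)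
    (ha : ∀ x ∈ s, ∀ g : ℕ → X, Tendsto g atTop (𝓝 x) →
      flim x ≤ liminf (fun k => f k (g k)) atTop)
    {c : β} (hc : ∀ x ∈ s, c < flim x) :
    ∀ᶠ k in atTop, ∀ x ∈ s, c < f k x := by
  by_contra hcon
  obtain ⟨φ, hφ, hbad⟩ := extraction_of_frequently_atTop (not_eventually.mp hcon)
  simp only [not_forall, not_lt] at hbad
  choose x hxs hfx using hbad
  obtain ⟨a, has, ψ, hψ, hxa⟩ := hs hxs
  have hσ : StrictMono (φ ∘ ψ) := hφ.comp hψ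
  set g := Function.extend (φ ∘ ψ) (x ∘ ψ) fun _ => a
  have hg : ∀ j, g (φ (ψ j)) = x (ψ j) := hσ.injective.extend_apply _ _
  have hfreq : ∃ᶠ k in atTop, f k (g k) ≤ c :=
    frequently_atTop.mpr fun K => ⟨φ (ψ K), hσ.id_le K, by simpa only [hg] using hfx (ψ K)⟩
  exact (hc a has).not_ge <|
    (ha a has g (hxa.extend_strictMono hσ)).trans (liminf_le_of_frequently_le' hfreq)

theorem EReal.nonneg_of_eq_mul_self {x : EReal} {t : ℝ} (ht : t ≠ 1) (hx : x = t * x)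
    (h : x ≠ ⊥) : 0 ≤ x := by
  induction x using EReal.rec with
  | bot => exact absurd rfl h
  | top => exact le_top
  | coe y =>
    have hy : y = t * y := by exact_mod_cast hx
    have : y = 0 := by
      by_contra hy0
      exact ht (mul_right_cancel₀ hy0 (hy.symm.trans (one_mul y).symm))
    simp [this]

theorem coe_mul_norm_sq_le_of_homogeneous {E : Type*} [NormedAddCommGroup E] [NormedSpace ℝ E]
    {g : E → EReal} (hhom : ∀ t : ℝ, 0 < t → ∀ w, g (t • w) = ((t ^ 2 : ℝ) : EReal) * g w)
    {c : ℝ} (h0 : g 0 ≠ ⊥) (hs : ∀ u ∈ Metric.sphere (0 : E) 1, (c : EReal) ≤ g u) (w : E) :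
    ((c * ‖w‖ ^ 2 : ℝ) : EReal) ≤ g w := by
  rcases eq_or_ne w 0 with rfl | hw
  · have h4 : g 0 = ((2 ^ 2 : ℝ) : EReal) * g 0 := by simpa using hhom 2 two_pos 0
    simpa using EReal.nonneg_of_eq_mul_self (by norm_num) h4 h0
  · have hr : 0 < ‖w‖ := norm_pos_iff.mpr hw
    have hu : ‖w‖⁻¹ • w ∈ Metric.sphere (0 : E) 1 := by
      simp [norm_smul, inv_mul_cancel₀ hr.ne']
    calc ((c * ‖w‖ ^ 2 : ℝ) : EReal) = ((‖w‖ ^ 2 : ℝ) : EReal) * c := by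
          rw [mul_comm, EReal.coe_mul]
      _ ≤ ((‖w‖ ^ 2 : ℝ) : EReal) * g (‖w‖⁻¹ • w) :=
          mul_le_mul_of_nonneg_left (hs _ hu) (by exact_mod_cast sq_nonneg ‖w‖)
      _ = g w := by rw [← hhom _ hr, smul_inv_smul₀ hr.ne']

theorem stmt6_general (n : ℕ) (f : ℕ → EuclideanSpace ℝ (Fin n) → EReal)
    (hhom : ∀ k, ∀ t : ℝ, 0 < t → ∀ w, f k (t • w) = ((t ^ 2 : ℝ) : EReal) * f k w)
    (μ : ℝ) (flim : EuclideanSpace ℝ (Fin n) → EReal)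
    (hbound : ∀ w, ((μ * ‖w‖ ^ 2 : ℝ) : EReal) ≤ flim w)
    (ha : ∀ w, ∀ wk : ℕ → EuclideanSpace ℝ (Fin n), Tendsto wk atTop (𝓝 w) →
      flim w ≤ Filter.liminf (fun k => f k (wk k)) atTop) :
    ∀ δ > (0 : ℝ), ∃ K : ℕ, ∀ k ≥ K, ∀ w,
      (((μ - δ) * ‖w‖ ^ 2 : ℝ) : EReal) ≤ f k w := by
  intro δ hδ
  have hzero : ∀ᶠ k in atTop, f k 0 ≠ ⊥ := by
    have h0 : (⊥ : EReal) < liminf (fun k => f k 0) atTop :=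
      (EReal.bot_lt_coe 0).trans_le <| by
        simpa using (hbound 0).trans (ha 0 _ tendsto_const_nhds)
    exact (eventually_lt_of_lt_liminf h0).mono fun k hk => hk.ne'
  have hsphere : ∀ᶠ k in atTop, ∀ u ∈ Metric.sphere (0 : EuclideanSpace ℝ (Fin n)) 1,
      ((μ - δ : ℝ) : EReal) < f k u := by
    refine (isCompact_sphere _ _).isSeqCompact.eventually_forall_lt_of_le_liminf
      (fun u _ => ha u) fun u hu => ?_
    have hμ : ((μ : ℝ) : EReal) ≤ flim u := by
      simpa [mem_sphere_zero_iff_norm.mp hu] using hbound u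
    exact (EReal.coe_lt_coe_iff.mpr (sub_lt_self μ hδ)).trans_le hμ
  obtain ⟨K, hK⟩ := eventually_atTop.mp (hzero.and hsphere)
  exact ⟨K, fun k hk => coe_mul_norm_sq_le_of_homogeneous (hhom k) (hK k hk).1
    fun u hu => ((hK k hk).2 u hu).le⟩

/-- Stability of uniform quadratic lower bounds under lower epi-convergence: if the
`f_k` are l.s.c., positively homogeneous of degree 2, and satisfy the lower
epi-convergence inequality towards `f` with `f(w) ≥ μ‖w‖²`, then for every `δ > 0`
eventually `f_k(w) ≥ (μ − δ)‖w‖²` for all `w`. -/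
theorem stmt6 (n : ℕ) (f : ℕ → EuclideanSpace ℝ (Fin n) → EReal)
    (hlsc : ∀ k, LowerSemicontinuous (f k))
    (hhom : ∀ k, ∀ t : ℝ, 0 < t → ∀ w, f k (t • w) = ((t ^ 2 : ℝ) : EReal) * f k w)
    (μ : ℝ) (flim : EuclideanSpace ℝ (Fin n) → EReal)
    (hbound : ∀ w, ((μ * ‖w‖ ^ 2 : ℝ) : EReal) ≤ flim w)
    (ha : ∀ w, ∀ wk : ℕ → EuclideanSpace ℝ (Fin n), Tendsto wk atTop (𝓝 w) →
      flim w ≤ Filter.liminf (fun k => f k (wk k)) atTop) :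
    ∀ δ > (0 : ℝ), ∃ K : ℕ, ∀ k ≥ K, ∀ w,
      (((μ - δ) * ‖w‖ ^ 2 : ℝ) : EReal) ≤ f k w :=
  stmt6_general n f hhom μ flim hbound ha
end

section
/- Let f : ℝⁿ → ℝ ∪ {∞} be proper and lower semicontinuous, x̄ ∈ dom f, v̄ ∈ ℝⁿ, and μ > κ. If d²f(x̄|v̄)(w) ≥ μ‖w‖² for all w ∈ ℝⁿ, then there is a neighborhood U of x̄ such that f(x) ≥ f(x̄) + ⟨v̄, x − x̄⟩ + (κ/2)‖x − x̄‖² for all x ∈ U. -/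
/-!
Since `d²f(x̄|v̄)(w) ≥ μ > κ` on the unit sphere, for each unit `w` the second-order difference
quotient exceeds `κ` for all small `t > 0` and all directions near `w`; compactness of the sphere
makes the threshold on `t` uniform. Writing `x = x̄ + t w` with `t = ‖x − x̄‖` and `‖w‖ = 1`, the
inequality `Δ_t²f(x̄|v̄)(w) > κ` rearranges to the growth estimate.
-/

open Filter Topology
open scoped RealInnerProductSpace

/-- The second-order difference quotient
`Δ_t²f(x|v)(w) = (f(x + t w) − f(x) − t⟨v, w⟩)/((1/2)t²)`, written as
multiplication by `2/t²` in the extended reals. -/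
noncomputable def secondQuot {n : ℕ} (f : EuclideanSpace ℝ (Fin n) → EReal)
    (x v : EuclideanSpace ℝ (Fin n)) (t : ℝ) (w : EuclideanSpace ℝ (Fin n)) : EReal :=
  ((2 / t ^ 2 : ℝ) : EReal) * (f (x + t • w) - f x - ((t * ⟪v, w⟫ : ℝ) : EReal))

/-- The second-order subderivative
`d²f(x|v)(w) = liminf_{t↓0, w'→w} Δ_t²f(x|v)(w')`. -/
noncomputable def d2 {n : ℕ} (f : EuclideanSpace ℝ (Fin n) → EReal)
    (x v : EuclideanSpace ℝ (Fin n)) (w : EuclideanSpace ℝ (Fin n)) : EReal :=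
  Filter.liminf (fun p : ℝ × EuclideanSpace ℝ (Fin n) => secondQuot f x v p.1 p.2)
    ((𝓝[>] (0 : ℝ)) ×ˢ 𝓝 w)

theorem IsCompact.eventually_forall_of_forall_eventually_prod {X Y : Type*} [TopologicalSpace Y]
    {l : Filter X} {K : Set Y} (hK : IsCompact K) {P : X → Y → Prop}
    (hP : ∀ y ∈ K, ∀ᶠ z in l ×ˢ 𝓝 y, P z.1 z.2) : ∀ᶠ x in l, ∀ y ∈ K, P x y :=
  (Eventually.curry (hK.mem_prod_nhdsSet_of_forall hP)).mono fun _ h ↦ h.self_of_nhdsSet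

section
variable {n : ℕ} {f : EuclideanSpace ℝ (Fin n) → EReal} {x v w : EuclideanSpace ℝ (Fin n)}
  {t κ : ℝ}

theorem add_le_of_lt_secondQuot (ht : 0 < t) (h : (κ : EReal) < secondQuot f x v t w) :
    f x + ((t * ⟪v, w⟫ + κ / 2 * t ^ 2 : ℝ) : EReal) ≤ f (x + t • w) := by
  have hc : (0 : ℝ) < 2 / t ^ 2 := by positivity
  unfold secondQuot at h
  generalize f (x + t • w) = A at h ⊢
  generalize f x = B at h ⊢
  -- `A - ⊤ = ⊥` and `⊥ - b = ⊥` in `EReal`, so the infinite cases contradict `h` or are trivial.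
  induction B using EReal.rec with
  | bot => simp
  | top => simp [EReal.coe_mul_bot_of_pos hc] at h
  | coe b =>
    induction A using EReal.rec with
    | bot => simp [EReal.coe_mul_bot_of_pos hc] at h
    | top => exact le_top
    | coe a =>
      norm_cast at h ⊢
      rw [div_mul_eq_mul_div, lt_div_iff₀ (by positivity)] at h
      nlinarith

theorem eventually_forall_mem_sphere_lt_secondQuot {μ : ℝ} (hκμ : κ < μ)
    (hd2 : ∀ w, ((μ * ‖w‖ ^ 2 : ℝ) : EReal) ≤ d2 f x v w) :
    ∀ᶠ t in 𝓝[>] 0, ∀ w ∈ Metric.sphere (0 : EuclideanSpace ℝ (Fin n)) 1,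
      (κ : EReal) < secondQuot f x v t w := by
  refine (isCompact_sphere _ _).eventually_forall_of_forall_eventually_prod fun w hw ↦ ?_
  refine eventually_lt_of_lt_liminf (lt_of_lt_of_le ?_ (hd2 w))
  rw [mem_sphere_zero_iff_norm.1 hw]
  exact_mod_cast (by linarith : κ < μ * 1 ^ 2)

end

theorem stmt9_general (n : ℕ) (f : EuclideanSpace ℝ (Fin n) → EReal)
    (xb vb : EuclideanSpace ℝ (Fin n)) (κ μ : ℝ) (hμκ : κ < μ)
    (hd2 : ∀ w, ((μ * ‖w‖ ^ 2 : ℝ) : EReal) ≤ d2 f xb vb w) :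
    ∃ U ∈ 𝓝 xb, ∀ x ∈ U,
      f xb + ((⟪vb, x - xb⟫ + (κ / 2) * ‖x - xb‖ ^ 2 : ℝ) : EReal) ≤ f x := by
  obtain ⟨ε, hε, hsmall⟩ := mem_nhdsGT_iff_exists_Ioo_subset.1
    (eventually_forall_mem_sphere_lt_secondQuot hμκ hd2)
  refine ⟨Metric.ball xb ε, Metric.ball_mem_nhds xb hε, fun x hx ↦ ?_⟩
  rcases eq_or_ne x xb with rfl | hne
  · simp
  set t := ‖x - xb‖
  have ht : 0 < t := norm_pos_iff.2 (sub_ne_zero.2 hne)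
  have hw : t⁻¹ • (x - xb) ∈ Metric.sphere 0 1 := by
    simp [t, norm_smul, ht.ne']
  have hgrowth := add_le_of_lt_secondQuot ht (hsmall ⟨ht, mem_ball_iff_norm.1 hx⟩ _ hw)
  rwa [smul_inv_smul₀ ht.ne', add_sub_cancel, inner_smul_right, mul_inv_cancel_left₀ ht.ne']
    at hgrowth

/-- A positive-definite second-order subderivative with modulus `μ > κ` implies local
second-order growth with modulus `κ`. -/
theorem stmt9 (n : ℕ) (f : EuclideanSpace ℝ (Fin n) → EReal)
    (hproper : ∃ x, f x ≠ ⊤) (hnebot : ∀ x, f x ≠ ⊥)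
    (hlsc : LowerSemicontinuous f)
    (xb vb : EuclideanSpace ℝ (Fin n)) (hdom : f xb ≠ ⊤) (κ μ : ℝ) (hμκ : κ < μ)
    (hd2 : ∀ w, ((μ * ‖w‖ ^ 2 : ℝ) : EReal) ≤ d2 f xb vb w) :
    ∃ U ∈ 𝓝 xb, ∀ x ∈ U,
      f xb + ((⟪vb, x - xb⟫ + (κ / 2) * ‖x - xb‖ ^ 2 : ℝ) : EReal) ≤ f x :=
  stmt9_general n f xb vb κ μ hμκ hd2
end

section
/- Let g : ℝⁿ → ℝ ∪ {∞} be finite at x̄ with v̄ ∈ ℝⁿ, and let f : ℝⁿ → ℝ be differentiable near x̄ and twice differentiable at x̄. Then for all w ∈ ℝⁿ, d²(f+g)(x̄ | ∇f(x̄) + v̄)(w) = ⟨w, ∇²f(x̄) w⟩ + d²g(x̄|v̄)(w). -/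
open Filter Topology
open scoped RealInnerProductSpace

open Asymptotics

/-!
Write `f(x̄ + u) = f(x̄) + ⟨∇f(x̄), u⟩ + ½⟨u, H u⟩ + R(u)` with `R(u) = o(‖u‖²)`. Along
`t ↓ 0, w' → w` the remainder satisfies `R(t w') = o(t²)`, so the second-order quotient of `f`
converges to `⟨w, H w⟩`. Since `g(x̄)` is finite, the quotient of `f + g` is the quotient of `f`
plus that of `g`, and adding a convergent real-valued term commutes with `liminf` in `EReal`.
-/

lemma EReal.liminf_add_of_tendsto_coe {α : Type*} {l : Filter α} [l.NeBot] {u v : α → EReal}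
    {c : ℝ} (hu : Tendsto u l (𝓝 c)) :
    liminf (u + v) l = c + liminf v l := by
  apply le_antisymm
  · have h := EReal.liminf_add_le (f := l) (u := u) (v := v)
      (.inl (hu.limsup_eq ▸ EReal.coe_ne_bot c)) (.inl (hu.limsup_eq ▸ EReal.coe_ne_top c))
    rwa [hu.limsup_eq] at h
  · have h := EReal.le_liminf_add (f := l) (u := u) (v := v)
    rwa [hu.liminf_eq] at h

lemma Asymptotics.IsLittleO.comp_smul_of_norm_sq {E F : Type*} [NormedAddCommGroup E]
    [NormedSpace ℝ E] [NormedAddCommGroup F] {R : E → F} (hR : R =o[𝓝 0] fun u => ‖u‖ ^ 2)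
    (w : E) :
    (fun p : ℝ × E => R (p.1 • p.2)) =o[𝓝 0 ×ˢ 𝓝 w] fun p => p.1 ^ 2 := by
  have hsmul : Tendsto (fun p : ℝ × E => p.1 • p.2) (𝓝 0 ×ˢ 𝓝 w) (𝓝 0) := by
    simpa only [zero_smul] using (tendsto_fst (f := 𝓝 (0 : ℝ)) (g := 𝓝 w)).smul tendsto_snd
  have hbounded : (fun p : ℝ × E => ‖p.2‖ ^ 2) =O[𝓝 0 ×ˢ 𝓝 w] fun _ => (1 : ℝ) :=
    ((tendsto_snd (f := 𝓝 (0 : ℝ))).norm.pow 2).isBigO_one ℝ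
  refine (hR.comp_tendsto hsmul).trans_isBigO ?_
  simpa only [Function.comp_def, norm_smul, mul_pow, Real.norm_eq_abs, sq_abs, mul_one] using
    (isBigO_refl (fun p : ℝ × E => p.1 ^ 2) _).mul hbounded

lemma tendsto_secondOrder_quotient {E : Type*} [NormedAddCommGroup E] [InnerProductSpace ℝ E]
    {f : E → ℝ} {x v : E} {H : E →L[ℝ] E}
    (htaylor : (fun u => f (x + u) - f x - ⟪v, u⟫ - (1 / 2) * ⟪u, H u⟫)
      =o[𝓝 (0 : E)] fun u => ‖u‖ ^ 2) (w : E) :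
    Tendsto (fun p : ℝ × E => 2 / p.1 ^ 2 * (f (x + p.1 • p.2) - f x - p.1 * ⟪v, p.2⟫))
      (𝓝[≠] 0 ×ˢ 𝓝 w) (𝓝 ⟪w, H w⟫) := by
  set R : E → ℝ := fun u => f (x + u) - f x - ⟪v, u⟫ - (1 / 2) * ⟪u, H u⟫
  have hl : 𝓝[≠] (0 : ℝ) ×ˢ 𝓝 w ≤ 𝓝 0 ×ˢ 𝓝 w := prod_mono nhdsWithin_le_nhds le_rfl
  have hR : Tendsto (fun p : ℝ × E => R (p.1 • p.2) / p.1 ^ 2) (𝓝[≠] 0 ×ˢ 𝓝 w) (𝓝 0) :=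
    ((htaylor.comp_smul_of_norm_sq w).tendsto_div_nhds_zero).mono_left hl
  have hquad : Tendsto (fun p : ℝ × E => ⟪p.2, H p.2⟫) (𝓝[≠] 0 ×ˢ 𝓝 w) (𝓝 ⟪w, H w⟫) :=
    (tendsto_snd.inner (H.continuous.tendsto w |>.comp tendsto_snd)).mono_left
      (prod_mono le_top le_rfl)
  have hsplit : ∀ᶠ p : ℝ × E in 𝓝[≠] 0 ×ˢ 𝓝 w,
      2 * (R (p.1 • p.2) / p.1 ^ 2) + ⟪p.2, H p.2⟫
        = 2 / p.1 ^ 2 * (f (x + p.1 • p.2) - f x - p.1 * ⟪v, p.2⟫) := by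
    filter_upwards [tendsto_fst.eventually (self_mem_nhdsWithin (s := {0}ᶜ))] with p hp
    simp only [R, real_inner_smul_left, real_inner_smul_right, map_smul]
    field_simp [Set.mem_compl_singleton_iff.mp hp]
    ring
  simpa only [mul_zero, zero_add] using ((hR.const_mul 2).add hquad).congr' hsplit

section SecondQuot

variable {n : ℕ}

lemma secondQuot_coe (f : EuclideanSpace ℝ (Fin n) → ℝ) (x v : EuclideanSpace ℝ (Fin n)) (t : ℝ)
    (w : EuclideanSpace ℝ (Fin n)) :
    secondQuot (fun y => (f y : EReal)) x v t w
      = ((2 / t ^ 2 * (f (x + t • w) - f x - t * ⟪v, w⟫) : ℝ) : EReal) := by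
  simp only [secondQuot]
  norm_cast

lemma secondQuot_add_of_finite (f : EuclideanSpace ℝ (Fin n) → ℝ)
    {g : EuclideanSpace ℝ (Fin n) → EReal} {x : EuclideanSpace ℝ (Fin n)}
    (hgx : g x ≠ ⊤ ∧ g x ≠ ⊥) (u v : EuclideanSpace ℝ (Fin n)) (t : ℝ)
    (w : EuclideanSpace ℝ (Fin n)) :
    secondQuot (fun y => (f y : EReal) + g y) x (u + v) t w
      = secondQuot (fun y => (f y : EReal)) x u t w + secondQuot g x v t w := by
  obtain ⟨g₀, hg₀⟩ : ∃ g₀ : ℝ, (g₀ : EReal) = g x := ⟨_, EReal.coe_toReal hgx.1 hgx.2⟩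
  simp only [secondQuot]
  rw [← EReal.left_distrib_of_nonneg_of_ne_top (EReal.coe_nonneg.2 (by positivity))
    (EReal.coe_ne_top _), ← hg₀, inner_add_left]
  congr 1
  induction g (x + t • w) using EReal.rec with
  | bot => simp [sub_eq_add_neg]
  | top =>
    simp only [sub_eq_add_neg, ← EReal.coe_neg, ← EReal.coe_add,
      EReal.top_add_coe, EReal.coe_add_top]
  | coe a => norm_cast; ring

end SecondQuot

theorem stmt10_general (n : ℕ) (g : EuclideanSpace ℝ (Fin n) → EReal)
    (xb vb : EuclideanSpace ℝ (Fin n)) (hgfin : g xb ≠ ⊤ ∧ g xb ≠ ⊥)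
    (f : EuclideanSpace ℝ (Fin n) → ℝ)
    (gf : EuclideanSpace ℝ (Fin n) → EuclideanSpace ℝ (Fin n))
    (H : EuclideanSpace ℝ (Fin n) →L[ℝ] EuclideanSpace ℝ (Fin n))
    (htaylor : (fun u => f (xb + u) - f xb - ⟪gf xb, u⟫ - (1 / 2) * ⟪u, H u⟫)
      =o[𝓝 (0 : EuclideanSpace ℝ (Fin n))] fun u => ‖u‖ ^ 2) :
    ∀ w, d2 (fun x => (f x : EReal) + g x) xb (gf xb + vb) w
      = ((⟪w, H w⟫ : ℝ) : EReal) + d2 g xb vb w := by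
  intro w
  have hf : Tendsto (fun p : ℝ × EuclideanSpace ℝ (Fin n) =>
      secondQuot (fun y => (f y : EReal)) xb (gf xb) p.1 p.2) (𝓝[>] 0 ×ˢ 𝓝 w)
      (𝓝 (⟪w, H w⟫ : ℝ)) := by
    simp only [secondQuot_coe]
    exact EReal.tendsto_coe.2 <| (tendsto_secondOrder_quotient htaylor w).mono_left <|
      prod_mono (nhdsWithin_mono _ fun _ ht => ne_of_gt ht) le_rfl
  simp only [d2, secondQuot_add_of_finite f hgfin]
  exact EReal.liminf_add_of_tendsto_coe hf

/-- Sum rule for second-order subderivatives: if `f` is differentiable near `x̄` with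
gradient `gf` continuous at `x̄` (strict differentiability), twice differentiable at
`x̄` with Hessian `H` (second-order Taylor expansion), and `g` is finite at `x̄`, then
`d²(f+g)(x̄ | ∇f(x̄)+v̄)(w) = ⟨w, H w⟩ + d²g(x̄|v̄)(w)`. -/
theorem stmt10 (n : ℕ) (g : EuclideanSpace ℝ (Fin n) → EReal)
    (xb vb : EuclideanSpace ℝ (Fin n)) (hgfin : g xb ≠ ⊤ ∧ g xb ≠ ⊥)
    (f : EuclideanSpace ℝ (Fin n) → ℝ)
    (gf : EuclideanSpace ℝ (Fin n) → EuclideanSpace ℝ (Fin n))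
    (hdiff : ∀ᶠ x in 𝓝 xb, HasGradientAt f (gf x) x)
    (hcont : ContinuousAt gf xb)
    (H : EuclideanSpace ℝ (Fin n) →L[ℝ] EuclideanSpace ℝ (Fin n))
    (hH : IsSelfAdjoint H)
    (htaylor : (fun u => f (xb + u) - f xb - ⟪gf xb, u⟫ - (1 / 2) * ⟪u, H u⟫)
      =o[𝓝 (0 : EuclideanSpace ℝ (Fin n))] fun u => ‖u‖ ^ 2) :
    ∀ w, d2 (fun x => (f x : EReal) + g x) xb (gf xb + vb) w
      = ((⟪w, H w⟫ : ℝ) : EReal) + d2 g xb vb w :=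
  stmt10_general n g xb vb hgfin f gf H htaylor
end

section
/- Let f : ℝⁿ → ℝ be C^{1,1} (continuously differentiable with locally Lipschitz gradient) near x̄ and strongly convex with modulus s > 0 on a neighborhood U of x̄, i.e., f(x') ≥ f(x) + ⟨∇f(x), x' − x⟩ + (s/2)‖x' − x‖² for all x, x' ∈ U. Then every matrix H in the Hessian bundle of f at x̄ satisfies ⟨w, H w⟩ ≥ s‖w‖² for all w ∈ ℝⁿ. -/
open Filter Topology
open scoped RealInnerProductSpace

/-- The Hessian bundle of `f` at `x`: all limits `H` of Hessians `∇²f(x_k)` along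
sequences `x_k → x` of points where the gradient of `f` is differentiable. -/
def hessBundle {n : ℕ} (f : EuclideanSpace ℝ (Fin n) → ℝ)
    (x : EuclideanSpace ℝ (Fin n)) :
    Set (EuclideanSpace ℝ (Fin n) →L[ℝ] EuclideanSpace ℝ (Fin n)) :=
  {H | ∃ xk : ℕ → EuclideanSpace ℝ (Fin n),
    Tendsto xk atTop (𝓝 x) ∧
    (∀ k, DifferentiableAt ℝ (gradient f) (xk k)) ∧
    Tendsto (fun k => fderiv ℝ (gradient f) (xk k)) atTop (𝓝 H)}

/-!
Strong convexity makes the gradient strongly monotone, `s ‖y - x‖² ≤ ⟪∇f y - ∇f x, y - x⟫`.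
Along `y = x + t w` this says that `t ↦ ⟪∇f (x + t w), w⟫ - s t ‖w‖²` is minimal at `t = 0`
on `t ≥ 0`, so where `∇f` is differentiable its one-sided derivative
`⟪w, ∇²f(x) w⟫ - s ‖w‖²` is nonnegative. The bound is closed in the Hessian, hence survives
in every limit of Hessians.
-/

variable {E : Type*} [NormedAddCommGroup E] [InnerProductSpace ℝ E]

lemma mul_norm_sq_le_inner_sub_of_strongConvex {f : E → ℝ} {g : E → E} {U : Set E} {s : ℝ}
    (hconv : ∀ x ∈ U, ∀ y ∈ U, f x + ⟪g x, y - x⟫ + (s / 2) * ‖y - x‖ ^ 2 ≤ f y)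
    {x y : E} (hx : x ∈ U) (hy : y ∈ U) :
    s * ‖y - x‖ ^ 2 ≤ ⟪g y - g x, y - x⟫ := by
  have hxy := hconv x hx y hy
  have hyx := hconv y hy x hx
  rw [← neg_sub y x, inner_neg_right, norm_neg] at hyx
  rw [inner_sub_left]
  linarith

lemma mul_norm_sq_le_inner_fderiv_of_strongMonotone {g : E → E} {U : Set E} {x : E} {s : ℝ}
    (hU : U ∈ 𝓝 x) (hmono : ∀ y ∈ U, s * ‖y - x‖ ^ 2 ≤ ⟪g y - g x, y - x⟫)
    (hg : DifferentiableAt ℝ g x) (w : E) :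
    s * ‖w‖ ^ 2 ≤ ⟪w, fderiv ℝ g x w⟫ := by
  set F : E → ℝ := fun y => ⟪g y, w⟫ - s * ⟪y, w⟫
  set S : Set E := {y ∈ U | ∃ t : ℝ, 0 < t ∧ x + t • w = y}
  have hmin : IsMinOn F S x := by
    rintro _ ⟨hyU, t, ht, rfl⟩
    have h : t * (s * t * ‖w‖ ^ 2) ≤ t * ⟪g (x + t • w) - g x, w⟫ := by
      have := hmono _ hyU
      rw [add_sub_cancel_left, norm_smul, Real.norm_of_nonneg ht.le, inner_smul_right] at this
      linarith
    have h := le_of_mul_le_mul_left h ht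
    rw [inner_sub_left] at h
    show F x ≤ F (x + t • w)
    simp only [F, inner_add_left, real_inner_smul_left, real_inner_self_eq_norm_sq]
    linarith
  have hcone : w ∈ posTangentConeAt S x := by
    apply mem_posTangentConeAt_of_frequently_mem
    have hnear : ∀ᶠ t : ℝ in 𝓝 0, x + t • w ∈ U := by
      have hline : Continuous fun t : ℝ => x + t • w := by fun_prop
      exact hline.tendsto' 0 x (by simp) hU
    exact ((hnear.filter_mono nhdsWithin_le_nhds).and
      (self_mem_nhdsWithin : Set.Ioi (0 : ℝ) ∈ 𝓝[>] 0)).frequently.mono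
      fun t ⟨htU, ht⟩ => ⟨htU, t, ht, rfl⟩
  have hF := (hg.hasFDerivAt.inner ℝ (hasFDerivAt_const w x)).sub
    (((hasFDerivAt_id x).inner ℝ (hasFDerivAt_const w x)).const_mul s)
  simpa [real_inner_comm] using
    (hmin.localize.on_subset le_rfl).hasFDerivWithinAt_nonneg hF.hasFDerivWithinAt hcone

lemma isClosed_setOf_mul_norm_sq_le_inner_apply (s : ℝ) :
    IsClosed {A : E →L[ℝ] E | ∀ w, s * ‖w‖ ^ 2 ≤ ⟪w, A w⟫} := by
  simp only [Set.ofPred_forall]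
  exact isClosed_iInter fun w => isClosed_le continuous_const (by fun_prop)

theorem stmt12_general (n : ℕ) (f : EuclideanSpace ℝ (Fin n) → ℝ)
    (xb : EuclideanSpace ℝ (Fin n))
    (U : Set (EuclideanSpace ℝ (Fin n))) (hU : U ∈ 𝓝 xb)
    (s : ℝ)
    (hconv : ∀ x ∈ U, ∀ x' ∈ U,
      f x + ⟪gradient f x, x' - x⟫ + (s / 2) * ‖x' - x‖ ^ 2 ≤ f x') :
    ∀ H ∈ hessBundle f xb, ∀ w, s * ‖w‖ ^ 2 ≤ ⟪w, H w⟫ := by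
  rintro H ⟨xk, hxk, hdiff, hH⟩
  refine (isClosed_setOf_mul_norm_sq_le_inner_apply s).mem_of_tendsto hH ?_
  filter_upwards [hxk.eventually (eventually_mem_nhds_iff.2 hU)] with k hk
  exact mul_norm_sq_le_inner_fderiv_of_strongMonotone hk
    (fun y hy => mul_norm_sq_le_inner_sub_of_strongConvex hconv (mem_of_mem_nhds hk) hy) (hdiff k)

/-- If `f` is `C^{1,1}` near `x̄` and strongly convex with modulus `s > 0` on a
neighborhood `U` of `x̄`, then every member of the Hessian bundle of `f` at `x̄` is
positive-definite with modulus `s`. -/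
theorem stmt12 (n : ℕ) (f : EuclideanSpace ℝ (Fin n) → ℝ)
    (xb : EuclideanSpace ℝ (Fin n))
    (U : Set (EuclideanSpace ℝ (Fin n))) (hU : U ∈ 𝓝 xb) (K : NNReal)
    (hdiff : ∀ x ∈ U, HasGradientAt f (gradient f x) x)
    (hlip : LipschitzOnWith K (gradient f) U)
    (s : ℝ) (hs : 0 < s)
    (hconv : ∀ x ∈ U, ∀ x' ∈ U,
      f x + ⟪gradient f x, x' - x⟫ + (s / 2) * ‖x' - x‖ ^ 2 ≤ f x') :
    ∀ H ∈ hessBundle f xb, ∀ w, s * ‖w‖ ^ 2 ≤ ⟪w, H w⟫ :=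
  stmt12_general n f xb U hU s hconv
end

section
/- Let f : ℝⁿ → ℝ be C^{1,1} around x̄ and suppose there is a neighborhood U of x̄ such that for every x ∈ U, every matrix H in the Hessian bundle of f at x satisfies ⟨w, H w⟩ ≥ s‖w‖² with s > 0. Then f is strongly convex with modulus s on U (assumed convex), i.e., f(x') ≥ f(x) + ⟨∇f(x), x' − x⟩ + (s/2)‖x' − x‖² for all x, x' ∈ U. -/
/-!
Rademacher's theorem makes the Lipschitz gradient `∇f` differentiable almost everywhere, and
wherever it is differentiable its derivative lies in the Hessian bundle, so it is `s`-coercive.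
By Fubini, almost every line in a given direction `d` meets the points of differentiability in
a set of full length; along such a segment the Lipschitz, hence absolutely continuous, function
`t ↦ ⟪d, ∇f (z + t • d)⟫` has derivative at least `s‖d‖²` almost everywhere, so
`⟪∇f (z + d) - ∇f z, d⟫ ≥ s‖d‖²`. Such segments are dense among pairs of points of `U`, since `U`
lies in the closure of its nonempty interior, so by continuity `∇f` is strongly monotone with
modulus `s` on `U`. The mean value theorem applied to
`t ↦ f (x + t • (x' - x)) - t ⟪∇f x, x' - x⟫ - (s / 2) t² ‖x' - x‖²` turns this into the claim.
-/

open Filter Topology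
open scoped RealInnerProductSpace

open Set MeasureTheory

theorem LipschitzOnWith.mul_sub_le_sub_of_ae_le_deriv {φ : ℝ → ℝ} {K : NNReal} {a b c : ℝ}
    (hab : a ≤ b) (hφ : LipschitzOnWith K φ (Icc a b))
    (hderiv : ∀ᵐ t, t ∈ Icc a b → c ≤ deriv φ t) :
    c * (b - a) ≤ φ b - φ a := by
  have hac : AbsolutelyContinuousOnInterval φ a b :=
    LipschitzOnWith.absolutelyContinuousOnInterval (by rwa [uIcc_of_le hab])
  rw [← hac.integral_deriv_eq_sub]
  calc c * (b - a) = ∫ _ in a..b, c := by simp [mul_comm]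
    _ ≤ ∫ t in a..b, deriv φ t :=
      intervalIntegral.integral_mono_ae_restrict hab intervalIntegrable_const
        hac.intervalIntegrable_deriv ((ae_restrict_iff' measurableSet_Icc).2 hderiv)

theorem lipschitzWith_add_smul {E : Type*} [SeminormedAddCommGroup E] [NormedSpace ℝ E]
    (z d : E) : LipschitzWith ‖d‖₊ fun t : ℝ => z + t • d :=
  LipschitzWith.of_dist_le_mul fun a b => by
    rw [dist_add_left, dist_eq_norm, dist_eq_norm, ← sub_smul, norm_smul, mul_comm, coe_nnnorm]

section InnerProductSpace

variable {E : Type*} [NormedAddCommGroup E] [InnerProductSpace ℝ E]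

theorem LipschitzOnWith.mul_norm_sq_le_inner_sub_of_ae_differentiableAt {g : E → E}
    {K : NNReal} {U : Set E} {z d : E} {s : ℝ} (hg : LipschitzOnWith K g U)
    (hseg : ∀ t ∈ Icc (0 : ℝ) 1, z + t • d ∈ U)
    (hae : ∀ᵐ t : ℝ, t ∈ Icc 0 1 → DifferentiableAt ℝ g (z + t • d))
    (hcoercive : ∀ y ∈ U, DifferentiableAt ℝ g y → ∀ w, s * ‖w‖ ^ 2 ≤ ⟪w, fderiv ℝ g y w⟫) :
    s * ‖d‖ ^ 2 ≤ ⟪g (z + d) - g z, d⟫ := by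
  set ψ : ℝ → ℝ := fun t => ⟪d, g (z + t • d)⟫
  have hψ : LipschitzOnWith _ ψ (Icc 0 1) :=
    (innerSL ℝ d).lipschitz.comp_lipschitzOnWith
      (hg.comp (lipschitzWith_add_smul z d).lipschitzOnWith hseg)
  have hderiv : ∀ᵐ t, t ∈ Icc (0 : ℝ) 1 → s * ‖d‖ ^ 2 ≤ deriv ψ t := by
    filter_upwards [hae] with t hdiff ht
    have hline : HasDerivAt (fun r : ℝ => z + r • d) d t := by
      simpa using ((hasDerivAt_id t).smul_const d).const_add z
    have hgd : HasDerivAt (fun r => g (z + r • d)) (fderiv ℝ g (z + t • d) d) t :=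
      (hdiff ht).hasFDerivAt.comp_hasDerivAt t hline
    rw [((hasDerivAt_const t d).inner ℝ hgd).deriv, inner_zero_left, add_zero]
    exact hcoercive _ (hseg t ht) (hdiff ht) d
  have := hψ.mul_sub_le_sub_of_ae_le_deriv zero_le_one hderiv
  simpa [ψ, inner_sub_left, real_inner_comm] using this

end InnerProductSpace

theorem MeasureTheory.ae_ae_add_smul {E : Type*} [NormedAddCommGroup E] [NormedSpace ℝ E]
    [SecondCountableTopology E] [MeasurableSpace E] [BorelSpace E] {μ : Measure E}
    [μ.IsAddRightInvariant] [SFinite μ] {P : E → Prop} (hP : ∀ᵐ y ∂μ, P y) (d : E) :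
    ∀ᵐ z ∂μ, ∀ᵐ t : ℝ, P (z + t • d) := by
  obtain ⟨S, hS, hSmeas, hSP⟩ := hP.exists_measurable_mem
  suffices ∀ᵐ z ∂μ, ∀ᵐ t : ℝ, z + t • d ∈ S from
    this.mono fun z hz => hz.mono fun t ht => hSP _ ht
  have hmeas : Measurable fun q : E × ℝ => q.1 + q.2 • d := by fun_prop
  rw [Measure.ae_ae_comm (p := fun z t => z + t • d ∈ S) (hSmeas.preimage hmeas)]
  exact .of_forall fun t => (measurePreserving_add_right μ (t • d)).quasiMeasurePreserving.ae hS

section FiniteDimensional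

variable {E : Type*} [NormedAddCommGroup E] [InnerProductSpace ℝ E] [FiniteDimensional ℝ E]

theorem LipschitzOnWith.mul_norm_sq_le_inner_sub {g : E → E} {K : NNReal} {U : Set E} {s : ℝ}
    (hg : LipschitzOnWith K g U) (hU : Convex ℝ U) (hUint : (interior U).Nonempty)
    (hcoercive : ∀ y ∈ U, DifferentiableAt ℝ g y → ∀ w, s * ‖w‖ ^ 2 ≤ ⟪w, fderiv ℝ g y w⟫)
    {x y : E} (hx : x ∈ U) (hy : y ∈ U) :
    s * ‖y - x‖ ^ 2 ≤ ⟪g y - g x, y - x⟫ := by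
  borelize E
  set Q : E → Prop := fun y => y ∈ interior U → DifferentiableAt ℝ g y
  have hQ : ∀ᵐ y ∂(Measure.addHaar : Measure E), Q y :=
    hg.ae_differentiableWithinAt_of_mem.mono fun y hy hyU =>
      (hy (interior_subset hyU)).differentiableAt (mem_interior_iff_mem_nhds.1 hyU)
  set D : Set (E × E) :=
    {p | p.1 ∈ interior U ∧ p.2 ∈ interior U ∧ ∀ᵐ t : ℝ, Q (p.1 + t • (p.2 - p.1))}
  have hD : ∀ p ∈ D, s * ‖p.2 - p.1‖ ^ 2 ≤ ⟪g p.2 - g p.1, p.2 - p.1⟫ := by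
    rintro ⟨u, v⟩ ⟨hu, hv, hae⟩
    have hseg : ∀ t ∈ Icc (0 : ℝ) 1, u + t • (v - u) ∈ interior U :=
      fun t ht => hU.interior.add_smul_sub_mem hu hv ht
    simpa using hg.mul_norm_sq_le_inner_sub_of_ae_differentiableAt
      (fun t ht => interior_subset (hseg t ht)) (hae.mono fun t ht ht01 => ht (hseg t ht01))
      hcoercive
  have hclosure : U ×ˢ U ⊆ closure D := by
    have hUcl : U ⊆ closure (interior U) :=
      (hU.closure_interior_eq_closure_of_nonempty_interior hUint).symm ▸ subset_closure
    refine (prod_mono hUcl hUcl).trans ?_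
    rw [← closure_prod_eq]
    refine closure_minimal ?_ isClosed_closure
    rintro ⟨u, v⟩ ⟨hu, hv⟩
    set d := v - u
    have hdense : Dense {z | ∀ᵐ t : ℝ, Q (z + t • d)} :=
      Measure.dense_of_ae (ae_ae_add_smul hQ d)
    set O := interior U ∩ (· + d) ⁻¹' interior U
    have hO : IsOpen O := isOpen_interior.inter (isOpen_interior.preimage (continuous_add_const d))
    have huO : u ∈ O := ⟨hu, by simpa [d] using hv⟩
    have himage : (fun z => (z, z + d)) '' (O ∩ {z | ∀ᵐ t : ℝ, Q (z + t • d)}) ⊆ D := by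
      rintro _ ⟨z, ⟨⟨hz, hzd⟩, hgood⟩, rfl⟩
      exact ⟨hz, hzd, by simpa using hgood⟩
    have hmem := mem_closure_image (f := fun z => (z, z + d)) (by fun_prop)
      (hdense.open_subset_closure_inter hO huO)
    simpa [d] using closure_mono himage hmem
  have hgc : ContinuousOn g U := hg.continuousOn
  have hcont_left : ContinuousOn (fun p : E × E => s * ‖p.2 - p.1‖ ^ 2) (U ×ˢ U) := by
    fun_prop
  have hcont_right : ContinuousOn (fun p : E × E => ⟪g p.2 - g p.1, p.2 - p.1⟫) (U ×ˢ U) :=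
    ((hgc.comp continuousOn_snd fun p hp => hp.2).sub
      (hgc.comp continuousOn_fst fun p hp => hp.1)).inner (by fun_prop)
  have hDU : D ⊆ U ×ˢ U := fun p hp => ⟨interior_subset hp.1, interior_subset hp.2.1⟩
  exact ContinuousWithinAt.closure_le (hclosure (mk_mem_prod hx hy))
    ((hcont_left (x, y) ⟨hx, hy⟩).mono hDU) ((hcont_right (x, y) ⟨hx, hy⟩).mono hDU) hD

end FiniteDimensional

section CompleteSpace

variable {E : Type*} [NormedAddCommGroup E] [InnerProductSpace ℝ E] [CompleteSpace E]

theorem Convex.add_inner_add_mul_norm_sq_le_of_inner_sub {f : E → ℝ} {f' : E → E} {U : Set E}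
    {s : ℝ} (hU : Convex ℝ U) (hf : ∀ x ∈ U, HasGradientAt f (f' x) x)
    (hmono : ∀ x ∈ U, ∀ y ∈ U, s * ‖y - x‖ ^ 2 ≤ ⟪f' y - f' x, y - x⟫)
    {x y : E} (hx : x ∈ U) (hy : y ∈ U) :
    f x + ⟪f' x, y - x⟫ + s / 2 * ‖y - x‖ ^ 2 ≤ f y := by
  set d := y - x
  have hseg : ∀ t ∈ Icc (0 : ℝ) 1, x + t • d ∈ U := fun t ht => hU.add_smul_sub_mem hx hy ht
  set φ : ℝ → ℝ := fun t => f (x + t • d) - t * ⟪f' x, d⟫ - s / 2 * t ^ 2 * ‖d‖ ^ 2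
  have hφ : ∀ t ∈ Icc (0 : ℝ) 1,
      HasDerivAt φ (⟪f' (x + t • d), d⟫ - ⟪f' x, d⟫ - s * t * ‖d‖ ^ 2) t := by
    intro t ht
    have hline : HasDerivAt (fun r : ℝ => x + r • d) d t := by
      simpa using ((hasDerivAt_id t).smul_const d).const_add x
    have hfd := (hf _ (hseg t ht)).hasFDerivAt.comp_hasDerivAt t hline
    rw [InnerProductSpace.toDual_apply_apply] at hfd
    exact ((hfd.sub ((hasDerivAt_id' t).mul_const ⟪f' x, d⟫)).sub
      (((hasDerivAt_pow 2 t).const_mul (s / 2)).mul_const (‖d‖ ^ 2))).congr_deriv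
      (by push_cast; ring)
  have hderiv_nonneg : ∀ t ∈ Ioo (0 : ℝ) 1,
      0 ≤ ⟪f' (x + t • d), d⟫ - ⟪f' x, d⟫ - s * t * ‖d‖ ^ 2 := by
    intro t ht
    have h := hmono x hx _ (hseg t (Ioo_subset_Icc_self ht))
    rw [add_sub_cancel_left, norm_smul, inner_smul_right, inner_sub_left, Real.norm_eq_abs,
      abs_of_pos ht.1] at h
    have : t * (s * t * ‖d‖ ^ 2) ≤ t * (⟪f' (x + t • d), d⟫ - ⟪f' x, d⟫) := by linarith
    linarith [le_of_mul_le_mul_left this ht.1]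
  have hφmono : MonotoneOn φ (Icc 0 1) := by
    refine monotoneOn_of_deriv_nonneg (convex_Icc 0 1)
      (fun t ht => (hφ t ht).continuousAt.continuousWithinAt)
      (fun t ht => (hφ t (interior_subset ht)).differentiableAt.differentiableWithinAt) ?_
    rw [interior_Icc]
    intro t ht
    rw [(hφ t (Ioo_subset_Icc_self ht)).deriv]
    exact hderiv_nonneg t ht
  have := hφmono (left_mem_Icc.2 zero_le_one) (right_mem_Icc.2 zero_le_one) zero_le_one
  simp only [φ, zero_smul, add_zero, one_smul, add_sub_cancel, d] at this
  linarith

end CompleteSpace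

theorem fderiv_mem_hessBundle {n : ℕ} {f : EuclideanSpace ℝ (Fin n) → ℝ}
    {x : EuclideanSpace ℝ (Fin n)} (hx : DifferentiableAt ℝ (gradient f) x) :
    fderiv ℝ (gradient f) x ∈ hessBundle f x :=
  ⟨fun _ => x, tendsto_const_nhds, fun _ => hx, tendsto_const_nhds⟩

theorem stmt13_general (n : ℕ) (f : EuclideanSpace ℝ (Fin n) → ℝ)
    (xb : EuclideanSpace ℝ (Fin n))
    (U : Set (EuclideanSpace ℝ (Fin n))) (hU : U ∈ 𝓝 xb) (hUconv : Convex ℝ U)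
    (K : NNReal)
    (hdiff : ∀ x ∈ U, HasGradientAt f (gradient f x) x)
    (hlip : LipschitzOnWith K (gradient f) U)
    (s : ℝ)
    (hhess : ∀ x ∈ U, ∀ H ∈ hessBundle f x, ∀ w, s * ‖w‖ ^ 2 ≤ ⟪w, H w⟫) :
    ∀ x ∈ U, ∀ x' ∈ U,
      f x + ⟪gradient f x, x' - x⟫ + (s / 2) * ‖x' - x‖ ^ 2 ≤ f x' := by
  have hcoercive : ∀ y ∈ U, DifferentiableAt ℝ (gradient f) y →
      ∀ w, s * ‖w‖ ^ 2 ≤ ⟪w, fderiv ℝ (gradient f) y w⟫ :=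
    fun y hy hgy => hhess y hy _ (fderiv_mem_hessBundle hgy)
  have hmono : ∀ x ∈ U, ∀ y ∈ U, s * ‖y - x‖ ^ 2 ≤ ⟪gradient f y - gradient f x, y - x⟫ :=
    fun x hx y hy => hlip.mul_norm_sq_le_inner_sub hUconv
      ⟨xb, mem_interior_iff_mem_nhds.2 hU⟩ hcoercive hx hy
  exact fun x hx x' hx' => hUconv.add_inner_add_mul_norm_sq_le_of_inner_sub hdiff hmono hx hx'

/-- If `f` is `C^{1,1}` around `x̄` and on a convex neighborhood `U` of `x̄` every
member of the Hessian bundle at every point of `U` is positive-definite with modulus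
`s > 0`, then `f` is strongly convex with modulus `s` on `U`. -/
theorem stmt13 (n : ℕ) (f : EuclideanSpace ℝ (Fin n) → ℝ)
    (xb : EuclideanSpace ℝ (Fin n))
    (U : Set (EuclideanSpace ℝ (Fin n))) (hU : U ∈ 𝓝 xb) (hUconv : Convex ℝ U)
    (K : NNReal)
    (hdiff : ∀ x ∈ U, HasGradientAt f (gradient f x) x)
    (hlip : LipschitzOnWith K (gradient f) U)
    (s : ℝ) (hs : 0 < s)
    (hhess : ∀ x ∈ U, ∀ H ∈ hessBundle f x, ∀ w, s * ‖w‖ ^ 2 ≤ ⟪w, H w⟫) :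
    ∀ x ∈ U, ∀ x' ∈ U,
      f x + ⟪gradient f x, x' - x⟫ + (s / 2) * ‖x' - x‖ ^ 2 ≤ f x' :=
  stmt13_general n f xb U hU hUconv K hdiff hlip s hhess
end

section
/- Let f : ℝⁿ → ℝ be C^{1,1} around x̄ and suppose every matrix H in the Hessian bundle of f at x̄ is positive-definite with modulus μ > s > 0. Then there is a neighborhood U of x̄ such that for every x ∈ U and every H in the Hessian bundle of f at x, ⟨w, H w⟩ ≥ s‖w‖² for all w. -/
open Filter Topology
open scoped RealInnerProductSpace

/-!
The Hessian bundle, viewed as a set-valued map, has closed graph (its graph is the closure of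
the graph of `∇²f` on the points of twice differentiability), and near `x̄` it takes values in a
fixed compact ball because `∇f` is Lipschitz there. A closed-graph map with values in a fixed
compact set is outer semicontinuous: near `x̄` every Hessian in the bundle lies within operator
distance `μ - s` of the bundle at `x̄`, and such a perturbation lowers the modulus of positive
definiteness from `μ` to at most `s`.
-/

theorem eventually_subset_of_isClosed_graph {X Y : Type*} [TopologicalSpace X]
    [TopologicalSpace Y] {Φ : X → Set Y} {x₀ : X} {C O : Set Y}
    (hΦ : IsClosed {p : X × Y | p.2 ∈ Φ p.1}) (hC : IsCompact C)
    (hΦC : ∀ᶠ x in 𝓝 x₀, Φ x ⊆ C) (hO : IsOpen O) (hΦO : Φ x₀ ⊆ O) :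
    ∀ᶠ x in 𝓝 x₀, Φ x ⊆ O := by
  have hout : ∀ᶠ x in 𝓝 x₀, ∀ y ∈ C \ O, y ∉ Φ x :=
    (hC.diff hO).eventually_forall_of_forall_eventually fun y hy =>
      hΦ.isOpen_compl.mem_nhds fun hy' => hy.2 (hΦO hy')
  filter_upwards [hΦC, hout] with x hxC hxO y hy
  by_contra hyO
  exact hxO y ⟨hxC hy, hyO⟩ hy

theorem le_inner_apply_self_of_dist_le {E : Type*} [NormedAddCommGroup E]
    [InnerProductSpace ℝ E] {A B : E →L[ℝ] E} {s μ : ℝ}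
    (hB : ∀ w, μ * ‖w‖ ^ 2 ≤ ⟪w, B w⟫) (hAB : dist A B ≤ μ - s) (w : E) :
    s * ‖w‖ ^ 2 ≤ ⟪w, A w⟫ := by
  have hdiff : |⟪w, (A - B) w⟫| ≤ (μ - s) * ‖w‖ ^ 2 :=
    calc |⟪w, (A - B) w⟫| ≤ ‖w‖ * ‖(A - B) w‖ := abs_real_inner_le_norm _ _
      _ ≤ ‖w‖ * (‖A - B‖ * ‖w‖) := by gcongr; exact (A - B).le_opNorm w
      _ ≤ ‖w‖ * ((μ - s) * ‖w‖) := by gcongr; rwa [← dist_eq_norm]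
      _ = (μ - s) * ‖w‖ ^ 2 := by ring
  have hsplit : ⟪w, A w⟫ = ⟪w, B w⟫ + ⟪w, (A - B) w⟫ := by
    rw [sub_apply, inner_sub_right]; ring
  linarith [hB w, neg_abs_le ⟪w, (A - B) w⟫]

section HessBundle

variable {n : ℕ} {f : EuclideanSpace ℝ (Fin n) → ℝ}

theorem mem_hessBundle_iff_mem_closure {x : EuclideanSpace ℝ (Fin n)}
    {H : EuclideanSpace ℝ (Fin n) →L[ℝ] EuclideanSpace ℝ (Fin n)} :
    H ∈ hessBundle f x ↔ (x, H) ∈ closure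
      {p | DifferentiableAt ℝ (gradient f) p.1 ∧ fderiv ℝ (gradient f) p.1 = p.2} := by
  rw [mem_closure_iff_seq_limit]
  constructor
  · rintro ⟨z, hz, hdiff, hH⟩
    exact ⟨fun k => (z k, fderiv ℝ (gradient f) (z k)), fun k => ⟨hdiff k, rfl⟩,
      hz.prodMk_nhds hH⟩
  · rintro ⟨p, hp, hlim⟩
    refine ⟨fun k => (p k).1, (continuous_fst.tendsto _).comp hlim, fun k => (hp k).1, ?_⟩
    exact ((continuous_snd.tendsto _).comp hlim).congr fun k => ((hp k).2).symm

theorem isClosed_graph_hessBundle (f : EuclideanSpace ℝ (Fin n) → ℝ) :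
    IsClosed {p : EuclideanSpace ℝ (Fin n) ×
      (EuclideanSpace ℝ (Fin n) →L[ℝ] EuclideanSpace ℝ (Fin n)) | p.2 ∈ hessBundle f p.1} := by
  simp only [mem_hessBundle_iff_mem_closure, Prod.mk.eta, Set.ofPred_mem_eq]
  exact isClosed_closure

theorem hessBundle_subset_closedBall {x : EuclideanSpace ℝ (Fin n)}
    {U : Set (EuclideanSpace ℝ (Fin n))} (hU : U ∈ 𝓝 x) {K : NNReal}
    (hlip : LipschitzOnWith K (gradient f) U) :
    hessBundle f x ⊆ Metric.closedBall 0 K := by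
  rintro H ⟨z, hz, -, hH⟩
  refine Metric.isClosed_closedBall.mem_of_tendsto hH ?_
  filter_upwards [hz.eventually (eventually_mem_nhds_iff.2 hU)] with k hk
  exact mem_closedBall_zero_iff.2 (norm_fderiv_le_of_lipschitzOn ℝ hk hlip)

end HessBundle

theorem stmt14_general (n : ℕ) (f : EuclideanSpace ℝ (Fin n) → ℝ)
    (xb : EuclideanSpace ℝ (Fin n))
    (U : Set (EuclideanSpace ℝ (Fin n))) (hU : U ∈ 𝓝 xb) (K : NNReal)
    (hlip : LipschitzOnWith K (gradient f) U)
    (s μ : ℝ) (hμs : s < μ)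
    (hhess : ∀ H ∈ hessBundle f xb, ∀ w, μ * ‖w‖ ^ 2 ≤ ⟪w, H w⟫) :
    ∃ V ∈ 𝓝 xb, ∀ x ∈ V, ∀ H ∈ hessBundle f x, ∀ w, s * ‖w‖ ^ 2 ≤ ⟪w, H w⟫ := by
  have hbounded : ∀ᶠ x in 𝓝 xb, hessBundle f x ⊆ Metric.closedBall 0 K := by
    filter_upwards [eventually_mem_nhds_iff.2 hU] with x hx
    exact hessBundle_subset_closedBall hx hlip
  have hnear : ∀ᶠ x in 𝓝 xb, hessBundle f x ⊆ Metric.thickening (μ - s) (hessBundle f xb) :=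
    eventually_subset_of_isClosed_graph (isClosed_graph_hessBundle f)
      (isCompact_closedBall _ _) hbounded Metric.isOpen_thickening
      (Metric.self_subset_thickening (sub_pos.2 hμs) _)
  refine ⟨_, hnear, fun x hx H hH => ?_⟩
  obtain ⟨M, hM, hHM⟩ := Metric.mem_thickening_iff.1 (hx hH)
  exact le_inner_apply_self_of_dist_le (hhess M hM) hHM.le

/-- If `f` is `C^{1,1}` around `x̄` and every member of the Hessian bundle of `f` at
`x̄` is positive-definite with modulus `μ > s > 0`, then on some neighborhood of `x̄`
every member of the Hessian bundle at every point is positive-definite with modulus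
`s`. -/
theorem stmt14 (n : ℕ) (f : EuclideanSpace ℝ (Fin n) → ℝ)
    (xb : EuclideanSpace ℝ (Fin n))
    (U : Set (EuclideanSpace ℝ (Fin n))) (hU : U ∈ 𝓝 xb) (K : NNReal)
    (hdiff : ∀ x ∈ U, HasGradientAt f (gradient f x) x)
    (hlip : LipschitzOnWith K (gradient f) U)
    (s μ : ℝ) (hs : 0 < s) (hμs : s < μ)
    (hhess : ∀ H ∈ hessBundle f xb, ∀ w, μ * ‖w‖ ^ 2 ≤ ⟪w, H w⟫) :
    ∃ V ∈ 𝓝 xb, ∀ x ∈ V, ∀ H ∈ hessBundle f x, ∀ w, s * ‖w‖ ^ 2 ≤ ⟪w, H w⟫ :=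
  stmt14_general n f xb U hU K hlip s μ hμs hhess
end
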